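/- Two diagrams are bisimilar if and only if they are logically equivalent for the diagrammatic path logic. -/

import Mathlib

open CategoryTheory

universe v u

variable {A : Type u} [Category.{v} A]

/-- A morphism of diagrams `(Φ, σ)` from `F : C ⥤ A` to `G : D ⥤ A`:
a functor `Φ : C ⥤ D` together with a natural isomorphism `σ : F ≅ Φ ⋙ G`. -/
structure DiagMor {C D : Type v} [SmallCategory C] [SmallCategory D]
    (F : C ⥤ A) (G : D ⥤ A) : Type (max u v) where
  Φ : C ⥤ D
  σ : F ≅ Φ ⋙ G

/-- A morphism of diagrams is open iff `Φ` is surjective on objects and a fibration. -/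
def DiagMor.IsOpen {C D : Type v} [SmallCategory C] [SmallCategory D]
    {F : C ⥤ A} {G : D ⥤ A} (m : DiagMor F G) : Prop :=
  (∀ d : D, ∃ c : C, m.Φ.obj c = d) ∧
  (∀ (c : C) (d' : D) (j : m.Φ.obj c ⟶ d'),
    ∃ (c' : C) (i : c ⟶ c') (h : m.Φ.obj c' = d'), m.Φ.map i ≫ eqToHom h = j)

/-- The type of triples `(c, f, d)` with `f : F(c) ≅ G(d)`. -/
abbrev BisimTriple {C D : Type v} [SmallCategory C] [SmallCategory D]
    (F : C ⥤ A) (G : D ⥤ A) : Type v :=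
  Σ (c : C) (d : D), F.obj c ≅ G.obj d

/-- A bisimulation between diagrams `F` and `G`. -/
def IsBisimulation {C D : Type v} [SmallCategory C] [SmallCategory D]
    (F : C ⥤ A) (G : D ⥤ A) (R : Set (BisimTriple F G)) : Prop :=
  (∀ r ∈ R, ∀ (c' : C) (i : r.1 ⟶ c'),
    ∃ (d' : D) (j : r.2.1 ⟶ d') (g : F.obj c' ≅ G.obj d'),
      F.map i ≫ g.hom = r.2.2.hom ≫ G.map j ∧ (⟨c', d', g⟩ : BisimTriple F G) ∈ R) ∧
  (∀ r ∈ R, ∀ (d' : D) (j : r.2.1 ⟶ d'),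
    ∃ (c' : C) (i : r.1 ⟶ c') (g : F.obj c' ≅ G.obj d'),
      F.map i ≫ g.hom = r.2.2.hom ≫ G.map j ∧ (⟨c', d', g⟩ : BisimTriple F G) ∈ R) ∧
  (∀ c : C, ∃ (d : D) (f : F.obj c ≅ G.obj d), (⟨c, d, f⟩ : BisimTriple F G) ∈ R) ∧
  (∀ d : D, ∃ (c : C) (f : F.obj c ≅ G.obj d), (⟨c, d, f⟩ : BisimTriple F G) ∈ R)

/-- Two diagrams are bisimilar if there is a span of open morphisms between them. -/
def Bisimilar {C D : Type v} [SmallCategory C] [SmallCategory D]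
    (F : C ⥤ A) (G : D ⥤ A) : Prop :=
  ∃ (E : Cat.{v, v}) (H : E ⥤ A) (mF : DiagMor H F) (mG : DiagMor H G),
    mF.IsOpen ∧ mG.IsOpen

/-- Morphism formulae of the diagrammatic path logic, located at an object `x` of `A`:
`⟨g⟩P` for `g : x ⟶ x'`, `?S` (where the object formula `S` is necessarily of the form
`[y]Q`), negation, and arbitrary conjunctions. -/
inductive MorForm (A : Type u) [Category.{v} A] : A → Type (max u (v + 1))
  | dia : ∀ {x x' : A}, (x ⟶ x') → MorForm A x' → MorForm A x
  | query : ∀ {x : A} (y : A), MorForm A y → MorForm A x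
  | neg : ∀ {x : A}, MorForm A x → MorForm A x
  | conj : ∀ {x : A} {I : Type v}, (I → MorForm A x) → MorForm A x

/-- Object formulae `[x]P` of the diagrammatic path logic. -/
structure ObjForm (A : Type u) [Category.{v} A] : Type (max u (v + 1)) where
  x : A
  P : MorForm A x

/-- Satisfaction `F, f, c ⊨ P` for a morphism formula `P` located at `x`,
where `f : F(c) ≅ x`. -/
def morSat {C : Type v} [SmallCategory C] (F : C ⥤ A) :
    (c : C) → (x : A) → (F.obj c ≅ x) → MorForm A x → Prop
  | c, _, f, MorForm.dia (x' := x') g P =>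
      ∃ (c' : C) (i : c ⟶ c') (h : F.obj c' ≅ x'),
        F.map i ≫ h.hom = f.hom ≫ g ∧ morSat F c' x' h P
  | c, _, _, MorForm.query y P => ∃ h : F.obj c ≅ y, morSat F c y h P
  | c, x, f, MorForm.neg P => ¬ morSat F c x f P
  | c, x, f, MorForm.conj P => ∀ i, morSat F c x f (P i)

/-- Satisfaction `F, c ⊨ [x]P` for object formulae. -/
def objSat {C : Type v} [SmallCategory C] (F : C ⥤ A) (c : C) (S : ObjForm A) : Prop :=
  ∃ f : F.obj c ≅ S.x, morSat F c S.x f S.P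

/-- `F` is logically simulated by `G`. -/
def LogSim {C D : Type v} [SmallCategory C] [SmallCategory D]
    (F : C ⥤ A) (G : D ⥤ A) : Prop :=
  ∀ c : C, ∃ d : D, ∀ S : ObjForm A, objSat F c S ↔ objSat G d S

/-- `F` and `G` are logically equivalent. -/
def LogEquiv {C D : Type v} [SmallCategory C] [SmallCategory D]
    (F : C ⥤ A) (G : D ⥤ A) : Prop :=
  LogSim F G ∧ LogSim G F

/-!
Open morphisms of diagrams preserve and reflect satisfaction: a natural isomorphism only
re-labels the isomorphisms in a satisfaction witness, and the lifting property of `Φ` lets a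
`⟨g⟩`-step taken downstairs be taken upstairs. So the two legs of an open span make `F` and `G`
logically equivalent.

Conversely, for logically equivalent diagrams the triples `(c, d, f)` under which `c` and `d`
satisfy the same morphism formulae form a bisimulation. If, say, a step `i : c ⟶ c'` had no
matching step from `d`, one could pick for every candidate square a formula telling `c'` apart
from its candidate partner; `⟨F i⟩` applied to the conjunction of all of them (a small
conjunction, the candidates forming a `Type v`) would tell `c` apart from `d`. A bisimulation
`R` yields the span of projections out of the category whose objects are the triples of `R` and
whose morphisms are commuting squares.
-/

section Invariance

variable {E C : Type v} [SmallCategory E] [SmallCategory C]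

theorem morSat_iff_of_natIso {H H' : E ⥤ A} (σ : H ≅ H') :
    ∀ {x : A} (P : MorForm A x) (e : E) (f : H.obj e ≅ x),
      morSat H e x f P ↔ morSat H' e x ((σ.app e).symm ≪≫ f) P
  | _, .dia g P, e, f => by
      simp only [morSat]
      constructor
      · rintro ⟨e', i, h, hsq, hP⟩
        refine ⟨e', i, (σ.app e').symm ≪≫ h, ?_, (morSat_iff_of_natIso σ P e' h).mp hP⟩
        simp [← hsq]
      · rintro ⟨e', i, h, hsq, hP⟩
        refine ⟨e', i, σ.app e' ≪≫ h, ?_, ?_⟩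
        · simp [hsq]
        · rw [morSat_iff_of_natIso σ P e', Iso.symm_self_id_assoc]
          exact hP
  | _, .query y P, e, f => by
      simp only [morSat]
      constructor
      · rintro ⟨h, hP⟩
        exact ⟨(σ.app e).symm ≪≫ h, (morSat_iff_of_natIso σ P e h).mp hP⟩
      · rintro ⟨h, hP⟩
        refine ⟨σ.app e ≪≫ h, ?_⟩
        rwa [morSat_iff_of_natIso σ P e, Iso.symm_self_id_assoc]
  | _, .neg P, e, f => not_congr (morSat_iff_of_natIso σ P e f)
  | _, .conj P, e, f => forall_congr' fun i => morSat_iff_of_natIso σ (P i) e f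

theorem objSat_iff_of_natIso {H H' : E ⥤ A} (σ : H ≅ H') (e : E) (S : ObjForm A) :
    objSat H e S ↔ objSat H' e S := by
  constructor
  · rintro ⟨f, hf⟩
    exact ⟨_, (morSat_iff_of_natIso σ S.P e f).mp hf⟩
  · rintro ⟨f, hf⟩
    refine ⟨σ.app e ≪≫ f, ?_⟩
    rwa [morSat_iff_of_natIso σ, Iso.symm_self_id_assoc]

theorem morSat_comp_iff_of_lift {Φ : E ⥤ C} (F : C ⥤ A)
    (hΦ : ∀ (e : E) (c' : C) (j : Φ.obj e ⟶ c'),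
      ∃ (e' : E) (i : e ⟶ e') (h : Φ.obj e' = c'), Φ.map i ≫ eqToHom h = j) :
    ∀ {x : A} (P : MorForm A x) (e : E) (f : F.obj (Φ.obj e) ≅ x),
      morSat (Φ ⋙ F) e x f P ↔ morSat F (Φ.obj e) x f P
  | _, .dia g P, e, f => by
      simp only [morSat]
      constructor
      · rintro ⟨e', i, h, hsq, hP⟩
        exact ⟨Φ.obj e', Φ.map i, h, hsq, (morSat_comp_iff_of_lift F hΦ P e' h).mp hP⟩
      · rintro ⟨c', j, h, hsq, hP⟩
        obtain ⟨e', i, rfl, rfl⟩ := hΦ e c' j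
        simp only [eqToHom_refl, Category.comp_id] at hsq hP ⊢
        exact ⟨e', i, h, hsq, (morSat_comp_iff_of_lift F hΦ P e' h).mpr hP⟩
  | _, .query y P, e, _ => exists_congr fun h => morSat_comp_iff_of_lift F hΦ P e h
  | _, .neg P, e, f => not_congr (morSat_comp_iff_of_lift F hΦ P e f)
  | _, .conj P, e, f => forall_congr' fun i => morSat_comp_iff_of_lift F hΦ (P i) e f

theorem DiagMor.objSat_iff {H : E ⥤ A} {F : C ⥤ A} {m : DiagMor H F} (hm : m.IsOpen)
    (e : E) (S : ObjForm A) : objSat H e S ↔ objSat F (m.Φ.obj e) S :=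
  (objSat_iff_of_natIso m.σ e S).trans <|
    exists_congr fun f => morSat_comp_iff_of_lift F hm.2 S.P e f

end Invariance

theorem logSim_of_open_span {E C D : Type v} [SmallCategory E] [SmallCategory C]
    [SmallCategory D] {H : E ⥤ A} {F : C ⥤ A} {G : D ⥤ A} {mF : DiagMor H F}
    {mG : DiagMor H G} (hF : mF.IsOpen) (hG : mG.IsOpen) : LogSim F G := by
  intro c
  obtain ⟨e, rfl⟩ := hF.1 c
  exact ⟨mG.Φ.obj e, fun S => (DiagMor.objSat_iff hF e S).symm.trans (DiagMor.objSat_iff hG e S)⟩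

theorem Bisimilar.logEquiv {C D : Type v} [SmallCategory C] [SmallCategory D]
    {F : C ⥤ A} {G : D ⥤ A} (h : Bisimilar F G) : LogEquiv F G := by
  obtain ⟨E, H, mF, mG, hF, hG⟩ := h
  exact ⟨logSim_of_open_span hF hG, logSim_of_open_span hG hF⟩

namespace IsBisimulation

variable {C D : Type v} [SmallCategory C] [SmallCategory D] {F : C ⥤ A} {G : D ⥤ A}
  (R : Set (BisimTriple F G))

structure Hom (t t' : R) : Type v where
  i : t.1.1 ⟶ t'.1.1
  j : t.1.2.1 ⟶ t'.1.2.1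
  comm : F.map i ≫ t'.1.2.2.hom = t.1.2.2.hom ≫ G.map j

instance : Category R where
  Hom := Hom R
  id t := ⟨𝟙 _, 𝟙 _, by simp⟩
  comp f g := ⟨f.i ≫ g.i, f.j ≫ g.j, by simp only [Functor.map_comp, Category.assoc, g.comm,
    reassoc_of% f.comm]⟩

def fst : R ⥤ C where
  obj t := t.1.1
  map f := f.i

def snd : R ⥤ D where
  obj t := t.1.2.1
  map f := f.j

def fstCompIsoSndComp : fst R ⋙ F ≅ snd R ⋙ G :=
  NatIso.ofComponents (fun t => t.1.2.2) Hom.comm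

variable {R}

theorem bisimilar (hR : IsBisimulation F G R) : Bisimilar F G := by
  obtain ⟨forth, back, totalC, totalD⟩ := hR
  refine ⟨Cat.of R, fst R ⋙ F, ⟨fst R, Iso.refl _⟩, ⟨snd R, fstCompIsoSndComp R⟩,
    ⟨fun c => ?_, fun t c' i => ?_⟩, ⟨fun d => ?_, fun t d' j => ?_⟩⟩
  · obtain ⟨d, f, hf⟩ := totalC c
    exact ⟨⟨⟨c, d, f⟩, hf⟩, rfl⟩
  · obtain ⟨d', j, g, hsq, hg⟩ := forth t.1 t.2 c' i
    exact ⟨⟨⟨c', d', g⟩, hg⟩, ⟨i, j, hsq⟩, rfl, Category.comp_id i⟩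
  · obtain ⟨c, f, hf⟩ := totalD d
    exact ⟨⟨⟨c, d, f⟩, hf⟩, rfl⟩
  · obtain ⟨c', i, g, hsq, hg⟩ := back t.1 t.2 d' j
    exact ⟨⟨⟨c', d', g⟩, hg⟩, ⟨i, j, hsq⟩, rfl, Category.comp_id j⟩

end IsBisimulation

def MorForm.transport : {x y : A} → (x ≅ y) → MorForm A x → MorForm A y
  | _, _, e, .dia g P => .dia (e.inv ≫ g) P
  | _, _, _, .query z P => .query z P
  | _, _, e, .neg P => .neg (P.transport e)
  | _, _, e, .conj P => .conj fun i => (P i).transport e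

theorem morSat_transport {C : Type v} [SmallCategory C] (F : C ⥤ A) :
    ∀ {x y : A} (e : x ≅ y) (P : MorForm A x) (c : C) (f : F.obj c ≅ x),
      morSat F c y (f ≪≫ e) (P.transport e) ↔ morSat F c x f P
  | _, _, _, .dia g P, _, _ => by simp [MorForm.transport, morSat]
  | _, _, _, .query z P, _, _ => Iff.rfl
  | _, _, e, .neg P, c, f => not_congr (morSat_transport F e P c f)
  | _, _, e, .conj P, c, f => forall_congr' fun i => morSat_transport F e (P i) c f

theorem exists_morSat_and_not_morSat {C D : Type v} [SmallCategory C] [SmallCategory D]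
    {F : C ⥤ A} {G : D ⥤ A} {c : C} {d : D} {x : A} {f : F.obj c ≅ x} {g : G.obj d ≅ x}
    (h : ∃ P, ¬(morSat F c x f P ↔ morSat G d x g P)) :
    ∃ P, morSat F c x f P ∧ ¬morSat G d x g P := by
  obtain ⟨P, hP⟩ := h
  by_cases hF : morSat F c x f P
  · exact ⟨P, hF, fun hG => hP (iff_of_true hF hG)⟩
  · exact ⟨.neg P, hF, fun hG => hP (iff_of_false hF hG)⟩

section LogRel

variable {C D : Type v} [SmallCategory C] [SmallCategory D] (F : C ⥤ A) (G : D ⥤ A)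

def logRel : Set (BisimTriple F G) :=
  {t | ∀ (x : A) (h : F.obj t.1 ≅ x) (P : MorForm A x),
    morSat F t.1 x h P ↔ morSat G t.2.1 x (t.2.2.symm ≪≫ h) P}

variable {F G}

theorem exists_not_iff_of_not_mem_logRel {c : C} {d : D} {f : F.obj c ≅ G.obj d}
    (hf : ⟨c, d, f⟩ ∉ logRel F G) {x : A} (e : F.obj c ≅ x) :
    ∃ P : MorForm A x, ¬(morSat F c x e P ↔ morSat G d x (f.symm ≪≫ e) P) := by
  simp only [logRel, Set.mem_ofPred_eq, not_forall] at hf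
  obtain ⟨y, h, P, hP⟩ := hf
  refine ⟨P.transport (h.symm ≪≫ e), ?_⟩
  have hF := morSat_transport F (h.symm ≪≫ e) P c h
  have hG := morSat_transport G (h.symm ≪≫ e) P d (f.symm ≪≫ h)
  simp only [Iso.trans_assoc, Iso.self_symm_id_assoc] at hF hG
  rwa [hF, hG]

theorem logRel_forth : ∀ r ∈ logRel F G, ∀ (c' : C) (i : r.1 ⟶ c'),
    ∃ (d' : D) (j : r.2.1 ⟶ d') (g : F.obj c' ≅ G.obj d'),
      F.map i ≫ g.hom = r.2.2.hom ≫ G.map j ∧ ⟨c', d', g⟩ ∈ logRel F G := by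
  rintro ⟨c, d, f⟩ hr c' i
  by_contra! hcon
  let T := {p : Σ d' : D, (d ⟶ d') × (F.obj c' ≅ G.obj d') //
    F.map i ≫ p.2.2.hom = f.hom ≫ G.map p.2.1}
  have hT (t : T) : ∃ P : MorForm A (F.obj c'), morSat F c' _ (Iso.refl _) P ∧
      ¬morSat G t.1.1 _ t.1.2.2.symm P := by
    simpa using exists_morSat_and_not_morSat
      (exists_not_iff_of_not_mem_logRel (hcon _ _ _ t.2) (Iso.refl _))
  choose P hPF hPG using hT
  obtain ⟨d', j, g, hsq, hG⟩ := (hr _ (Iso.refl _) (.dia (F.map i) (.conj P))).mp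
    ⟨c', i, Iso.refl _, by simp, hPF⟩
  exact hPG ⟨⟨d', j, g.symm⟩, by simp only [Iso.trans_refl, Iso.symm_hom] at hsq; simp [Iso.comp_inv_eq, hsq]⟩ (hG _)

theorem logRel_back : ∀ r ∈ logRel F G, ∀ (d' : D) (j : r.2.1 ⟶ d'),
    ∃ (c' : C) (i : r.1 ⟶ c') (g : F.obj c' ≅ G.obj d'),
      F.map i ≫ g.hom = r.2.2.hom ≫ G.map j ∧ ⟨c', d', g⟩ ∈ logRel F G := by
  rintro ⟨c, d, f⟩ hr d' j
  by_contra! hcon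
  let T := {p : Σ c' : C, (c ⟶ c') × (F.obj c' ≅ G.obj d') //
    F.map p.2.1 ≫ p.2.2.hom = f.hom ≫ G.map j}
  have hT (t : T) : ∃ P : MorForm A (G.obj d'), morSat G d' _ (Iso.refl _) P ∧
      ¬morSat F t.1.1 _ t.1.2.2 P := by
    have := exists_not_iff_of_not_mem_logRel (hcon _ _ _ t.2) t.1.2.2
    simp only [Iso.symm_self_id, iff_comm (a := morSat F _ _ _ _)] at this
    exact exists_morSat_and_not_morSat this
  choose P hPG hPF using hT
  obtain ⟨c', i, g, hsq, hF⟩ := (hr _ f (.dia (G.map j) (.conj P))).mpr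
    ⟨d', j, Iso.refl _, by simp, hPG⟩
  exact hPF ⟨⟨c', i, g⟩, by simpa using hsq⟩ (hF _)

theorem exists_mem_logRel_of_objSat_iff {c : C} {d : D}
    (h : ∀ S : ObjForm A, objSat F c S ↔ objSat G d S) :
    ∃ f : F.obj c ≅ G.obj d, ⟨c, d, f⟩ ∈ logRel F G := by
  by_contra! hcon
  have hT (g : F.obj c ≅ G.obj d) : ∃ P : MorForm A (F.obj c),
      morSat F c _ (Iso.refl _) P ∧ ¬morSat G d _ g.symm P := by
    simpa using exists_morSat_and_not_morSat
      (exists_not_iff_of_not_mem_logRel (hcon g) (Iso.refl _))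
  choose P hPF hPG using hT
  obtain ⟨e, hG⟩ := (h ⟨F.obj c, .conj P⟩).mp ⟨Iso.refl _, hPF⟩
  exact hPG e.symm (hG _)

theorem LogEquiv.isBisimulation_logRel (h : LogEquiv F G) :
    IsBisimulation F G (logRel F G) := by
  refine ⟨logRel_forth, logRel_back, fun c => ?_, fun d => ?_⟩
  · obtain ⟨d, hd⟩ := h.1 c
    exact ⟨d, exists_mem_logRel_of_objSat_iff hd⟩
  · obtain ⟨c, hc⟩ := h.2 d
    exact ⟨c, exists_mem_logRel_of_objSat_iff fun S => (hc S).symm⟩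

end LogRel

/-- two diagrams are bisimilar if and only if they are logically equivalent
for the diagrammatic path logic. -/
theorem stmt8 {C D : Type v} [SmallCategory C] [SmallCategory D]
    (F : C ⥤ A) (G : D ⥤ A) :
    Bisimilar F G ↔ LogEquiv F G :=
  ⟨Bisimilar.logEquiv, fun h => h.isBisimulation_logRel.bisimilar⟩
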